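/- arXiv:1304.5038 — 13 statements merged into one kernel-verified Lean document; each statement's English description precedes it below -/
import Mathlib

section
/- If Condition (dual certificate) holds for a solution x̂ of the basis pursuit analysis problem (minimize ‖Ψᵀx‖₁ subject to Φx = b), then x̂ is the unique solution. Specifically: if Ker(Ψᵀ_J) ∩ Ker(Φ) = {0} and there exists y ∈ ℝˡ with Ψy ∈ Im(Φᵀ), y_I = sign(Ψᵀ_I x̂), and ‖y_J‖_∞ < 1, then for every h ∈ Ker(Φ)\{0}, ‖Ψᵀ(x̂+h)‖₁ > ‖Ψᵀx̂‖₁. -/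
open Matrix

/-- ℓ₁ norm of a finite real vector. -/
noncomputable def l1 {k : ℕ} (v : Fin k → ℝ) : ℝ := ∑ i, |v i|

/-- ℓ₂ (Euclidean) norm of a finite real vector. -/
noncomputable def l2 {k : ℕ} (v : Fin k → ℝ) : ℝ := Real.sqrt (∑ i, (v i) ^ 2)

/-- ℓ₁ norm of the subvector indexed by `S`. -/
noncomputable def l1S {k : ℕ} (S : Finset (Fin k)) (v : Fin k → ℝ) : ℝ := ∑ i ∈ S, |v i|

/-- ℓ₂ norm of the subvector indexed by `S`. -/
noncomputable def l2S {k : ℕ} (S : Finset (Fin k)) (v : Fin k → ℝ) : ℝ :=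
  Real.sqrt (∑ i ∈ S, (v i) ^ 2)

/-- ℓ∞ norm of the subvector indexed by `S` (0 if `S` is empty). -/
noncomputable def linfS {k : ℕ} (S : Finset (Fin k)) (v : Fin k → ℝ) : ℝ := ⨆ i ∈ S, |v i|

/-! Write `u = Ψᵀ x̂` and `v = Ψᵀ h`. Since `Ψ y = Φᵀ β` and `Φ h = 0`, `⟨y, v⟩ = ⟨β, Φ h⟩ = 0`.
Coordinatewise, `|u i| + y i * v i ≤ |u i + v i|`: off `J` because `y i = sign (u i)` is a
subgradient of `|·|` at `u i`, on `J` because `u i = 0` and `|y i| ≤ 1`. Summing gives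
`‖u‖₁ = ‖u‖₁ + ⟨y, v⟩ ≤ ‖u + v‖₁`, and the inequality is strict at any `j ∈ J` with `v j ≠ 0`,
which exists by the kernel condition because `h ≠ 0`. -/

theorem mul_le_abs_of_abs_le_one {α : Type*} [Ring α] [LinearOrder α] [IsStrictOrderedRing α]
    {t : α} (ht : |t| ≤ 1) (c : α) : t * c ≤ |c| :=
  calc t * c ≤ |t| * |c| := (le_abs_self _).trans (abs_mul t c).le
    _ ≤ |c| := mul_le_of_le_one_left (abs_nonneg c) ht

theorem mul_lt_abs_of_abs_lt_one {α : Type*} [Ring α] [LinearOrder α] [IsStrictOrderedRing α]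
    {t c : α} (ht : |t| < 1) (hc : c ≠ 0) : t * c < |c| :=
  calc t * c ≤ |t| * |c| := (le_abs_self _).trans (abs_mul t c).le
    _ < |c| := mul_lt_of_lt_one_left (abs_pos.mpr hc) ht

theorem Real.abs_sign_le_one (r : ℝ) : |Real.sign r| ≤ 1 := by
  rcases Real.sign_apply_eq r with h | h | h <;> simp [h]

theorem Real.sign_mul_self (r : ℝ) : Real.sign r * r = |r| := by
  rcases lt_trichotomy r 0 with h | rfl | h
  · rw [Real.sign_of_neg h, abs_of_neg h, neg_one_mul]
  · simp
  · rw [Real.sign_of_pos h, abs_of_pos h, one_mul]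

theorem Real.abs_add_sign_mul_le (a c : ℝ) : |a| + Real.sign a * c ≤ |a + c| := by
  rw [← Real.sign_mul_self, ← mul_add]
  exact mul_le_abs_of_abs_le_one (Real.abs_sign_le_one a) (a + c)

theorem dotProduct_transpose_mulVec_eq_zero {R m n l : Type*} [CommSemiring R]
    [Fintype m] [Fintype n] [Fintype l] {Φ : Matrix m n R} {Ψ : Matrix n l R} {y : l → R}
    {β : m → R} (hy : Ψ *ᵥ y = Φᵀ *ᵥ β) {h : n → R} (hh : Φ *ᵥ h = 0) :
    y ⬝ᵥ Ψᵀ *ᵥ h = 0 := by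
  rw [dotProduct_mulVec, vecMul_transpose, hy, mulVec_transpose, ← dotProduct_mulVec, hh,
    dotProduct_zero]

theorem l1_lt_l1_add_of_dualCertificate {k : ℕ} {u v y : Fin k → ℝ} {J : Finset (Fin k)}
    (hu : ∀ i ∈ J, u i = 0) (hyS : ∀ i ∉ J, y i = Real.sign (u i)) (hyJ : ∀ i ∈ J, |y i| < 1)
    (horth : y ⬝ᵥ v = 0) (hv : ∃ i ∈ J, v i ≠ 0) : l1 u < l1 (u + v) := by
  have hle : ∀ i ∈ Finset.univ, |u i| + y i * v i ≤ |(u + v) i| := by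
    intro i _
    by_cases hi : i ∈ J
    · simpa [hu i hi] using mul_le_abs_of_abs_le_one (hyJ i hi).le (v i)
    · simpa [hyS i hi] using Real.abs_add_sign_mul_le (u i) (v i)
  have hlt : ∃ i ∈ Finset.univ, |u i| + y i * v i < |(u + v) i| := by
    obtain ⟨i, hi, hvi⟩ := hv
    exact ⟨i, Finset.mem_univ i, by simpa [hu i hi] using mul_lt_abs_of_abs_lt_one (hyJ i hi) hvi⟩
  calc l1 u = ∑ i, (|u i| + y i * v i) := by
        rw [Finset.sum_add_distrib, ← dotProduct, horth, add_zero, l1]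
    _ < l1 (u + v) := Finset.sum_lt_sum hle hlt

theorem stmt0_general {m n l : ℕ} (Φ : Matrix (Fin m) (Fin n) ℝ) (Ψ : Matrix (Fin n) (Fin l) ℝ)
    (xh : Fin n → ℝ)
    (I : Finset (Fin l))
    (hI : I = Finset.univ.filter fun i => Ψ.transpose.mulVec xh i ≠ 0)
    (hker : ∀ h : Fin n → ℝ, (∀ i ∈ Iᶜ, Ψ.transpose.mulVec h i = 0) →
      Φ.mulVec h = 0 → h = 0)
    (y : Fin l → ℝ)
    (hyIm : ∃ β : Fin m → ℝ, Ψ.mulVec y = Φ.transpose.mulVec β)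
    (hyI : ∀ i ∈ I, y i = Real.sign (Ψ.transpose.mulVec xh i))
    (hyJ : ∀ i ∈ Iᶜ, |y i| < 1) :
    ∀ h : Fin n → ℝ, Φ.mulVec h = 0 → h ≠ 0 →
      l1 (Ψ.transpose.mulVec xh) < l1 (Ψ.transpose.mulVec (xh + h)) := by
  intro h hΦh hne
  obtain ⟨β, hβ⟩ := hyIm
  have hsupp : ∀ i ∈ Iᶜ, (Ψᵀ *ᵥ xh) i = 0 := by
    intro i hi
    simpa [hI] using hi
  have hJ : ∃ i ∈ Iᶜ, (Ψᵀ *ᵥ h) i ≠ 0 := by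
    by_contra! hc
    exact hne (hker h hc hΦh)
  rw [mulVec_add]
  exact l1_lt_l1_add_of_dualCertificate hsupp (fun i hi => hyI i (by simpa using hi)) hyJ
    (dotProduct_transpose_mulVec_eq_zero hβ hΦh) hJ

/-- the dual certificate condition implies uniqueness for basis pursuit analysis. -/
theorem stmt0 {m n l : ℕ} (Φ : Matrix (Fin m) (Fin n) ℝ) (Ψ : Matrix (Fin n) (Fin l) ℝ)
    (b : Fin m → ℝ) (xh : Fin n → ℝ) (hfeas : Φ.mulVec xh = b)
    (hΦ : Φ.rank = m)
    (I : Finset (Fin l))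
    (hI : I = Finset.univ.filter fun i => Ψ.transpose.mulVec xh i ≠ 0)
    (hker : ∀ h : Fin n → ℝ, (∀ i ∈ Iᶜ, Ψ.transpose.mulVec h i = 0) →
      Φ.mulVec h = 0 → h = 0)
    (y : Fin l → ℝ)
    (hyIm : ∃ β : Fin m → ℝ, Ψ.mulVec y = Φ.transpose.mulVec β)
    (hyI : ∀ i ∈ I, y i = Real.sign (Ψ.transpose.mulVec xh i))
    (hyJ : ∀ i ∈ Iᶜ, |y i| < 1) :
    ∀ h : Fin n → ℝ, Φ.mulVec h = 0 → h ≠ 0 →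
      l1 (Ψ.transpose.mulVec xh) < l1 (Ψ.transpose.mulVec (xh + h)) :=
  stmt0_general Φ Ψ xh I hI hker y hyIm hyI hyJ
end

section
/- If x̂ is the unique solution to the basis pursuit analysis problem minimize ‖Ψᵀx‖₁ subject to Φx = b, then for every nonzero h ∈ Ker(Φ), the strict inequality ⟨Ψᵀ_I h, sign(Ψᵀ_I x̂)⟩ < ‖Ψᵀ_{Iᶜ} h‖₁ holds. -/
open Matrix

lemma abs_sub_small {a c : ℝ} (h : |c| < |a|) : |a - c| = |a| - c * Real.sign a := by
  rcases lt_trichotomy a 0 with ha | ha | ha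
  · rw [Real.sign_of_neg ha]
    rw [abs_of_neg ha] at h ⊢
    rcases abs_lt.mp h with ⟨h1, h2⟩
    rw [abs_of_neg (by linarith)]
    ring
  · subst ha; simp at h; linarith [abs_nonneg c]
  · rw [Real.sign_of_pos ha]
    rw [abs_of_pos ha] at h ⊢
    rcases abs_lt.mp h with ⟨h1, h2⟩
    rw [abs_of_pos (by linarith)]
    ring

/-- uniqueness implies the strict null-space inequality. -/
theorem stmt1 {m n l : ℕ} (Φ : Matrix (Fin m) (Fin n) ℝ) (Ψ : Matrix (Fin n) (Fin l) ℝ)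
    (b : Fin m → ℝ) (xh : Fin n → ℝ) (hfeas : Φ.mulVec xh = b)
    (I : Finset (Fin l))
    (hI : I = Finset.univ.filter fun i => Ψ.transpose.mulVec xh i ≠ 0)
    (huniq : ∀ x : Fin n → ℝ, Φ.mulVec x = b → x ≠ xh →
      l1 (Ψ.transpose.mulVec xh) < l1 (Ψ.transpose.mulVec x)) :
    ∀ h : Fin n → ℝ, Φ.mulVec h = 0 → h ≠ 0 →
      ∑ i ∈ I, Ψ.transpose.mulVec h i * Real.sign (Ψ.transpose.mulVec xh i)
        < l1S Iᶜ (Ψ.transpose.mulVec h) := by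
  intro h hker hne
  set u := Ψ.transpose.mulVec xh with hu
  set v := Ψ.transpose.mulVec h with hv
  have hupos : ∀ i ∈ I, 0 < |u i| := by
    intro i hi
    rw [hI, Finset.mem_filter] at hi
    exact abs_pos.mpr hi.2
  have huzero : ∀ i ∈ Iᶜ, u i = 0 := by
    intro i hi
    rw [Finset.mem_compl, hI, Finset.mem_filter] at hi
    by_contra hc
    exact hi ⟨Finset.mem_univ i, hc⟩
  -- choose small t > 0
  obtain ⟨t, ht0, htI⟩ : ∃ t : ℝ, 0 < t ∧ ∀ i ∈ I, t * |v i| < |u i| := by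
    set s : Finset ℝ := insert 1 (I.image fun i => |u i| / (2 * (|v i| + 1))) with hs
    have hsne : s.Nonempty := ⟨1, Finset.mem_insert_self _ _⟩
    refine ⟨s.min' hsne, ?_, ?_⟩
    · have hmem := s.min'_mem hsne
      rcases Finset.mem_insert.mp hmem with h1 | h2
      · rw [h1]; norm_num
      · obtain ⟨i, hi, hieq⟩ := Finset.mem_image.mp h2
        rw [← hieq]
        have := hupos i hi
        positivity
    · intro i hi
      have hle : s.min' hsne ≤ |u i| / (2 * (|v i| + 1)) :=
        Finset.min'_le _ _ (Finset.mem_insert_of_mem (Finset.mem_image_of_mem _ hi))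
      have hpos := hupos i hi
      have h2 : |u i| / (2 * (|v i| + 1)) * |v i| < |u i| := by
        rw [div_mul_eq_mul_div, div_lt_iff₀ (by positivity)]
        nlinarith [abs_nonneg (v i)]
      calc s.min' hsne * |v i| ≤ |u i| / (2 * (|v i| + 1)) * |v i| :=
            mul_le_mul_of_nonneg_right hle (abs_nonneg _)
        _ < |u i| := h2
  -- the perturbed point
  have hxfeas : Φ.mulVec (xh - t • h) = b := by
    rw [Matrix.mulVec_sub, Matrix.mulVec_smul, hker, hfeas]
    simp
  have hxne : xh - t • h ≠ xh := by
    intro hc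
    apply hne
    have : t • h = 0 := by
      have := sub_eq_self.mp hc
      exact this
    simpa [smul_eq_zero, ne_of_gt ht0] using this
  have key := huniq _ hxfeas hxne
  have hmv : Ψ.transpose.mulVec (xh - t • h) = fun i => u i - t * v i := by
    funext i
    rw [Matrix.mulVec_sub, Matrix.mulVec_smul]
    simp [hu, hv, smul_eq_mul]
  rw [hmv] at key
  -- rewrite both l1 norms via split over I and Iᶜ
  have hsplit : ∀ f : Fin l → ℝ, ∑ i, f i = ∑ i ∈ I, f i + ∑ i ∈ Iᶜ, f i :=
    fun f => (Finset.sum_add_sum_compl I f).symm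
  have hlu : l1 u = ∑ i ∈ I, |u i| := by
    rw [l1, hsplit]
    have : ∑ i ∈ Iᶜ, |u i| = 0 :=
      Finset.sum_eq_zero fun i hi => by rw [huzero i hi, abs_zero]
    rw [this, add_zero]
  have hlx : l1 (fun i => u i - t * v i)
      = ∑ i ∈ I, (|u i| - t * (v i * Real.sign (u i))) + t * ∑ i ∈ Iᶜ, |v i| := by
    rw [l1, hsplit]
    congr 1
    · apply Finset.sum_congr rfl
      intro i hi
      have habs : |t * v i| < |u i| := by
        rw [abs_mul, abs_of_pos ht0]; exact htI i hi
      rw [abs_sub_small habs]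
      ring
    · rw [Finset.mul_sum]
      apply Finset.sum_congr rfl
      intro i hi
      rw [huzero i hi, zero_sub, abs_neg, abs_mul, abs_of_pos ht0]
  rw [hlu, hlx, Finset.sum_sub_distrib, ← Finset.mul_sum] at key
  have : t * ∑ i ∈ I, v i * Real.sign (u i) < t * ∑ i ∈ Iᶜ, |v i| := by linarith
  rw [l1S]
  exact lt_of_mul_lt_mul_left this (le_of_lt ht0)
end

section
/- If x̂ is the unique solution to the basis pursuit analysis problem minimize ‖Ψᵀx‖₁ subject to Φx = b, then Ker(Ψᵀ_{Iᶜ}) ∩ Ker(Φ) = {0}, where I = supp(Ψᵀx̂). -/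
open Matrix

/-!
If `Ψᵀh` vanishes off the support of `Ψᵀx̂`, then for small `t > 0` the vectors `Ψᵀx̂ ± tΨᵀh`
have the signs of `Ψᵀx̂` on that support, so the ℓ₁ norm is affine on the segment
`[x̂ - th, x̂ + th]`: `‖Ψᵀ(x̂ + th)‖₁ + ‖Ψᵀ(x̂ - th)‖₁ = 2‖Ψᵀx̂‖₁`. If moreover `Φh = 0`, both ends
are feasible, so uniqueness of `x̂` leaves only `h = 0`.
-/

open Topology

lemma abs_add_add_abs_sub_of_abs_le {a c : ℝ} (h : |c| ≤ |a|) :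
    |a + c| + |a - c| = 2 * |a| := by
  rcases abs_cases a with ⟨ha, _⟩ | ⟨ha, _⟩ <;>
  rcases abs_cases c with ⟨hc, _⟩ | ⟨hc, _⟩ <;>
  rcases abs_cases (a + c) with ⟨hac, _⟩ | ⟨hac, _⟩ <;>
  rcases abs_cases (a - c) with ⟨hac', _⟩ | ⟨hac', _⟩ <;>
  linarith

lemma l1_add_add_l1_sub_of_abs_le {k : ℕ} {v w : Fin k → ℝ} (h : ∀ i, |w i| ≤ |v i|) :
    l1 (v + w) + l1 (v - w) = 2 * l1 v := by
  simp only [l1, ← Finset.sum_add_distrib, Finset.mul_sum, Pi.add_apply, Pi.sub_apply]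
  exact Finset.sum_congr rfl fun i _ => abs_add_add_abs_sub_of_abs_le (h i)

lemma exists_pos_abs_smul_le {k : ℕ} {v w : Fin k → ℝ} (h : ∀ i, v i = 0 → w i = 0) :
    ∃ t : ℝ, 0 < t ∧ ∀ i, |(t • w) i| ≤ |v i| := by
  have hsmall : ∀ i, ∀ᶠ t in 𝓝[>] (0 : ℝ), |(t • w) i| ≤ |v i| := by
    intro i
    by_cases hv : v i = 0
    · exact Filter.Eventually.of_forall fun t => by simp [h i hv, hv]
    · have hlim : Filter.Tendsto (fun t : ℝ => |(t • w) i|) (𝓝 0) (𝓝 0) := by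
        simpa using ((continuous_id.mul continuous_const).abs.tendsto (0 : ℝ))
      exact nhdsWithin_le_nhds (hlim.eventually (ge_mem_nhds (abs_pos.mpr hv)))
  obtain ⟨t, ht, hpos⟩ := ((Filter.eventually_all.mpr hsmall).and self_mem_nhdsWithin).exists
  exact ⟨t, hpos, ht⟩

/-- uniqueness implies Ker(Ψᵀ_{Iᶜ}) ∩ Ker(Φ) = {0}. -/
theorem stmt2 {m n l : ℕ} (Φ : Matrix (Fin m) (Fin n) ℝ) (Ψ : Matrix (Fin n) (Fin l) ℝ)
    (b : Fin m → ℝ) (xh : Fin n → ℝ) (hfeas : Φ.mulVec xh = b)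
    (I : Finset (Fin l))
    (hI : I = Finset.univ.filter fun i => Ψ.transpose.mulVec xh i ≠ 0)
    (huniq : ∀ x : Fin n → ℝ, Φ.mulVec x = b → x ≠ xh →
      l1 (Ψ.transpose.mulVec xh) < l1 (Ψ.transpose.mulVec x)) :
    ∀ h : Fin n → ℝ, (∀ i ∈ Iᶜ, Ψ.transpose.mulVec h i = 0) → Φ.mulVec h = 0 → h = 0 := by
  intro h hker hΦ
  by_contra hne
  have hsupp : ∀ i, (Ψᵀ *ᵥ xh) i = 0 → (Ψᵀ *ᵥ h) i = 0 := fun i hi =>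
    hker i (by simp [hI, hi])
  obtain ⟨t, ht, hsmall⟩ := exists_pos_abs_smul_le hsupp
  have hth : t • h ≠ 0 := smul_ne_zero ht.ne' hne
  have hplus := huniq (xh + t • h) (by simp [mulVec_add, mulVec_smul, hΦ, hfeas])
    (by simpa using hth)
  have hminus := huniq (xh - t • h) (by simp [mulVec_sub, mulVec_smul, hΦ, hfeas])
    (by simpa [sub_eq_self] using hth)
  rw [mulVec_add, mulVec_smul] at hplus
  rw [mulVec_sub, mulVec_smul] at hminus
  linarith [l1_add_add_l1_sub_of_abs_le hsmall]
end

section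
/- Let γ > 0 and suppose the function x ↦ γ‖Φx − b‖₂² + ‖Ψᵀx‖₁ is constant on a convex set Ω ⊆ ℝⁿ. Then Φx − b is constant on Ω (i.e., Φx₁ = Φx₂ for all x₁, x₂ ∈ Ω), and consequently ‖Ψᵀx‖₁ is also constant on Ω. -/
open Matrix

/-!
The objective is `f ∘ A + g` with `A x = Φx − b` affine, `f = γ‖·‖₂²` strictly convex and
`g = ‖Ψᵀ ·‖₁` convex. If `A x₁ ≠ A x₂` for two points of `Ω`, strict convexity of `f` makes the
objective at the midpoint (which lies in `Ω`) strictly smaller than the average of its values at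
`x₁` and `x₂`, contradicting constancy. Once `Φx − b` agrees at two points, so does the `ℓ₁` term.
-/

open Set

theorem StrictConvexOn.smul {𝕜 E β : Type*} [CommSemiring 𝕜] [PartialOrder 𝕜] [AddCommMonoid E]
    [AddCommMonoid β] [PartialOrder β] [SMul 𝕜 E] [Module 𝕜 β] [PosSMulStrictMono 𝕜 β]
    {s : Set E} {f : E → β} {c : 𝕜} (hc : 0 < c) (hf : StrictConvexOn 𝕜 s f) :
    StrictConvexOn 𝕜 s fun x => c • f x :=
  ⟨hf.1, fun x hx y hy hxy a b ha hb hab =>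
    calc
      c • f (a • x + b • y) < c • (a • f x + b • f y) :=
        smul_lt_smul_of_pos_left (hf.2 hx hy hxy ha hb hab) hc
      _ = a • c • f x + b • c • f y := by rw [smul_add, smul_comm c, smul_comm c]⟩

theorem norm_smul_add_smul_sq {F : Type*} [NormedAddCommGroup F] [InnerProductSpace ℝ F]
    (x y : F) {a b : ℝ} (hab : a + b = 1) :
    ‖a • x + b • y‖ ^ 2 = a * ‖x‖ ^ 2 + b * ‖y‖ ^ 2 - a * b * ‖x - y‖ ^ 2 := by
  rw [norm_add_sq_real, norm_sub_sq_real, norm_smul, norm_smul, real_inner_smul_left,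
    real_inner_smul_right, Real.norm_eq_abs, Real.norm_eq_abs, mul_pow, mul_pow, sq_abs, sq_abs]
  obtain rfl : b = 1 - a := eq_sub_of_add_eq' hab
  ring

theorem strictConvexOn_norm_sq {F : Type*} [NormedAddCommGroup F] [InnerProductSpace ℝ F] :
    StrictConvexOn ℝ univ fun x : F => ‖x‖ ^ 2 := by
  refine ⟨convex_univ, fun x _ y _ hxy a b ha hb hab => ?_⟩
  have hdist : 0 < a * b * ‖x - y‖ ^ 2 := by
    have : 0 < ‖x - y‖ := norm_pos_iff.mpr (sub_ne_zero.mpr hxy)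
    positivity
  dsimp only
  rw [norm_smul_add_smul_sq x y hab, smul_eq_mul, smul_eq_mul]
  linarith

theorem AffineMap.apply_eq_of_strictConvexOn_comp_add_eq_const {𝕜 E F : Type*} [Field 𝕜]
    [LinearOrder 𝕜] [IsStrictOrderedRing 𝕜] [AddCommGroup E] [Module 𝕜 E] [AddCommGroup F]
    [Module 𝕜 F] {Ω : Set E} (hΩ : Convex 𝕜 Ω) (A : E →ᵃ[𝕜] F) {f : F → 𝕜} {g : E → 𝕜}
    (hf : StrictConvexOn 𝕜 univ f) (hg : ConvexOn 𝕜 Ω g) {c : 𝕜}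
    (hc : ∀ x ∈ Ω, f (A x) + g x = c) {x y : E} (hx : x ∈ Ω) (hy : y ∈ Ω) : A x = A y := by
  by_contra hne
  have hhalf : (0 : 𝕜) < 1 / 2 := one_half_pos
  have hsum : (1 / 2 : 𝕜) + 1 / 2 = 1 := add_halves 1
  have hf_mid := hf.2 (mem_univ _) (mem_univ _) hne hhalf hhalf hsum
  have hg_mid := hg.2 hx hy hhalf.le hhalf.le hsum
  rw [← Convex.combo_affine_apply hsum] at hf_mid
  have hc_mid := hc _ (hΩ hx hy hhalf.le hhalf.le hsum)
  simp only [smul_eq_mul] at hf_mid hg_mid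
  linarith [hc x hx, hc y hy]

theorem l1_eq_norm_toLp {k : ℕ} (v : Fin k → ℝ) : l1 v = ‖WithLp.toLp 1 v‖ := by
  simp [l1, PiLp.norm_eq_of_L1]

theorem convexOn_l1 {k : ℕ} : ConvexOn ℝ univ (l1 : (Fin k → ℝ) → ℝ) :=
  (convexOn_univ_norm.comp_linearMap (WithLp.linearEquiv 1 ℝ (Fin k → ℝ)).symm.toLinearMap).congr
    fun v _ => (l1_eq_norm_toLp v).symm

theorem l2_eq_norm_toLp {k : ℕ} (v : Fin k → ℝ) : l2 v = ‖WithLp.toLp 2 v‖ := by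
  simp [l2, EuclideanSpace.norm_eq]

/-- if γ‖Φx−b‖₂² + ‖Ψᵀx‖₁ is constant on a convex set, so are Φx−b and ‖Ψᵀx‖₁. -/
theorem stmt3 {m n l : ℕ} (Φ : Matrix (Fin m) (Fin n) ℝ) (Ψ : Matrix (Fin n) (Fin l) ℝ)
    (b : Fin m → ℝ) (γ : ℝ) (hγ : 0 < γ)
    (Ω : Set (Fin n → ℝ)) (hΩ : Convex ℝ Ω)
    (c : ℝ)
    (hc : ∀ x ∈ Ω, γ * (l2 (Φ.mulVec x - b)) ^ 2 + l1 (Ψ.transpose.mulVec x) = c) :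
    ∀ x₁ ∈ Ω, ∀ x₂ ∈ Ω, Φ.mulVec x₁ - b = Φ.mulVec x₂ - b ∧
      l1 (Ψ.transpose.mulVec x₁) = l1 (Ψ.transpose.mulVec x₂) := by
  intro x₁ h₁ x₂ h₂
  let A : (Fin n → ℝ) →ᵃ[ℝ] EuclideanSpace ℝ (Fin m) :=
    ((WithLp.linearEquiv 2 ℝ (Fin m → ℝ)).symm.toLinearMap ∘ₗ Φ.mulVecLin).toAffineMap -
      AffineMap.const ℝ _ (WithLp.toLp 2 b)
  have hA : ∀ x, A x = WithLp.toLp 2 (Φ.mulVec x - b) := fun x => by simp [A]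
  have hf : StrictConvexOn ℝ univ fun v : EuclideanSpace ℝ (Fin m) => γ * ‖v‖ ^ 2 :=
    strictConvexOn_norm_sq.smul hγ
  have hg : ConvexOn ℝ Ω fun x => l1 (Ψ.transpose.mulVec x) :=
    (convexOn_l1.comp_linearMap Ψ.transpose.mulVecLin).subset (subset_univ Ω) hΩ
  have hAx : A x₁ = A x₂ := A.apply_eq_of_strictConvexOn_comp_add_eq_const hΩ hf hg
    (fun x hx => by simpa only [hA, l2_eq_norm_toLp] using hc x hx) h₁ h₂
  have hres : Φ.mulVec x₁ - b = Φ.mulVec x₂ - b := by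
    rw [hA, hA] at hAx
    exact WithLp.toLp_injective 2 hAx
  refine ⟨hres, ?_⟩
  linarith [hres ▸ hc x₁ h₁, hc x₂ h₂]
end

section
/- The solution set X_λ of the unconstrained lasso-type analysis problem minimize ‖Φx − b‖₂² + λ‖Ψᵀx‖₁ (λ > 0) has the property that Φx − b is identical for all x ∈ X_λ, and ‖Ψᵀx‖₁ is identical for all x ∈ X_λ. -/
open Matrix

lemma sq_l2 {k : ℕ} (v : Fin k → ℝ) : (l2 v) ^ 2 = ∑ i, (v i) ^ 2 := by
  simpa [l2] using Real.sq_sqrt (Finset.sum_nonneg fun i _ => sq_nonneg (v i))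

/-- on the solution set of the lasso-type problem, the residual and the
analysis ℓ₁ value are constant. -/
theorem stmt4 {m n l : ℕ} (Φ : Matrix (Fin m) (Fin n) ℝ) (Ψ : Matrix (Fin n) (Fin l) ℝ)
    (b : Fin m → ℝ) (lam : ℝ) (hlam : 0 < lam)
    (F : (Fin n → ℝ) → ℝ)
    (hF : F = fun x => (l2 (Φ.mulVec x - b)) ^ 2 + lam * l1 (Ψ.transpose.mulVec x)) :
    ∀ x₁ x₂ : Fin n → ℝ, (∀ z, F x₁ ≤ F z) → (∀ z, F x₂ ≤ F z) →
      Φ.mulVec x₁ - b = Φ.mulVec x₂ - b ∧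
        l1 (Ψ.transpose.mulVec x₁) = l1 (Ψ.transpose.mulVec x₂) := by
  intro x₁ x₂ h₁ h₂
  have hFeq : F x₁ = F x₂ := le_antisymm (h₁ x₂) (h₂ x₁)
  set r₁ : Fin m → ℝ := Φ.mulVec x₁ - b with hr₁
  set r₂ : Fin m → ℝ := Φ.mulVec x₂ - b with hr₂
  set u₁ : Fin l → ℝ := Ψ.transpose.mulVec x₁ with hu₁
  set u₂ : Fin l → ℝ := Ψ.transpose.mulVec x₂ with hu₂
  set z : Fin n → ℝ := (1/2 : ℝ) • (x₁ + x₂) with hz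
  have hrz : Φ.mulVec z - b = fun i => (r₁ i + r₂ i) / 2 := by
    funext i
    simp only [hz, Matrix.mulVec_smul, Matrix.mulVec_add, hr₁, hr₂,
      Pi.sub_apply, Pi.smul_apply, Pi.add_apply, smul_eq_mul]
    ring
  have huz : Ψ.transpose.mulVec z = fun j => (u₁ j + u₂ j) / 2 := by
    funext j
    simp only [hz, Matrix.mulVec_smul, Matrix.mulVec_add, hu₁, hu₂,
      Pi.smul_apply, Pi.add_apply, smul_eq_mul]
    ring
  -- value of F at the midpoint
  have hFz : F z = ∑ i, ((r₁ i + r₂ i) / 2) ^ 2 + lam * ∑ j, |(u₁ j + u₂ j) / 2| := by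
    rw [hF]; simp only [hrz, huz, sq_l2, l1]
  have hFx₁ : F x₁ = ∑ i, (r₁ i) ^ 2 + lam * ∑ j, |u₁ j| := by
    rw [hF]; simp only [← hr₁, ← hu₁, sq_l2, l1]
  have hFx₂ : F x₂ = ∑ i, (r₂ i) ^ 2 + lam * ∑ j, |u₂ j| := by
    rw [hF]; simp only [← hr₂, ← hu₂, sq_l2, l1]
  -- ℓ₁ part is convex
  have hl1 : ∑ j, |(u₁ j + u₂ j) / 2| ≤ (∑ j, |u₁ j| + ∑ j, |u₂ j|) / 2 := by
    rw [← Finset.sum_add_distrib, Finset.sum_div]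
    refine Finset.sum_le_sum fun j _ => ?_
    rw [abs_div]
    have := abs_add_le (u₁ j) (u₂ j)
    have h2 : |(2:ℝ)| = 2 := by norm_num
    rw [h2]
    linarith
  set D : ℝ := ∑ i, ((r₁ i - r₂ i) ^ 2) / 4 with hD
  have hDnonneg : 0 ≤ D :=
    Finset.sum_nonneg fun i _ => by positivity
  -- quadratic part: exact identity with slack D
  have hquad : ∑ i, ((r₁ i + r₂ i) / 2) ^ 2 + D = ∑ i, ((r₁ i) ^ 2 / 2 + (r₂ i) ^ 2 / 2) := by
    rw [hD, ← Finset.sum_add_distrib]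
    exact Finset.sum_congr rfl fun i _ => by ring
  have hsplit : ∑ i, ((r₁ i) ^ 2 / 2 + (r₂ i) ^ 2 / 2)
      = (∑ i, (r₁ i) ^ 2) / 2 + (∑ i, (r₂ i) ^ 2) / 2 := by
    rw [Finset.sum_add_distrib, Finset.sum_div, Finset.sum_div]
  -- F z ≤ (F x₁ + F x₂)/2 - D
  have hkey : F z ≤ (F x₁ + F x₂) / 2 - D := by
    rw [hFz, hFx₁, hFx₂]
    have := mul_le_mul_of_nonneg_left hl1 (le_of_lt hlam)
    linarith
  have hfz : F x₁ ≤ F z := h₁ z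
  have hD0 : D = 0 := by
    have h := le_trans hfz hkey
    rw [hFeq] at h
    linarith
  have hri : ∀ i, r₁ i = r₂ i := by
    intro i
    have hall : ∀ i ∈ (Finset.univ : Finset (Fin m)), ((r₁ i - r₂ i) ^ 2) / 4 = 0 :=
      (Finset.sum_eq_zero_iff_of_nonneg fun i _ => by positivity).mp hD0
    have := hall i (Finset.mem_univ i)
    have h4 : (r₁ i - r₂ i) ^ 2 = 0 := by linarith
    have := pow_eq_zero_iff (n := 2) (by norm_num) |>.mp h4
    linarith
  have hreq : r₁ = r₂ := funext hri
  refine ⟨hreq, ?_⟩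
  have : lam * l1 u₁ = lam * l1 u₂ := by
    have hq : ∑ i, (r₁ i) ^ 2 = ∑ i, (r₂ i) ^ 2 := by rw [hreq]
    have := hFeq
    rw [hFx₁, hFx₂] at this
    simp only [l1]
    linarith
  exact mul_left_cancel₀ (ne_of_gt hlam) this
end

section
/- Suppose Ψ has full row rank. Then on the solution set Y_δ of the constrained problem minimize ‖Ψᵀx‖₁ subject to ‖Φx − b‖₂ ≤ δ, the residual Φx − b is constant: either Y_δ = {0}, or every x ∈ Y_δ satisfies ‖Φx − b‖₂ = δ. -/
open Matrix

lemma l2_eq_norm {k : ℕ} (v : Fin k → ℝ) :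
    l2 v = ‖(WithLp.equiv 2 (Fin k → ℝ)).symm v‖ := by
  rw [EuclideanSpace.norm_eq]
  simp [l2, sq_abs]

lemma l2_nonneg {k : ℕ} (v : Fin k → ℝ) : 0 ≤ l2 v := Real.sqrt_nonneg _

lemma l2_add_le {k : ℕ} (u v : Fin k → ℝ) : l2 (u + v) ≤ l2 u + l2 v := by
  simp only [l2_eq_norm]
  have : (WithLp.equiv 2 (Fin k → ℝ)).symm (u + v)
      = (WithLp.equiv 2 (Fin k → ℝ)).symm u + (WithLp.equiv 2 (Fin k → ℝ)).symm v := rfl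
  rw [this]; exact norm_add_le _ _

lemma l2_smul {k : ℕ} (c : ℝ) (v : Fin k → ℝ) : l2 (c • v) = |c| * l2 v := by
  simp only [l2_eq_norm]
  have : (WithLp.equiv 2 (Fin k → ℝ)).symm (c • v)
      = c • (WithLp.equiv 2 (Fin k → ℝ)).symm v := rfl
  rw [this, norm_smul, Real.norm_eq_abs]

lemma l1_nonneg {k : ℕ} (v : Fin k → ℝ) : 0 ≤ l1 v :=
  Finset.sum_nonneg fun _ _ => abs_nonneg _

lemma l1_smul {k : ℕ} (c : ℝ) (v : Fin k → ℝ) : l1 (c • v) = |c| * l1 v := by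
  simp [l1, Finset.mul_sum, abs_mul]

lemma l1_eq_zero {k : ℕ} {v : Fin k → ℝ} (h : l1 v = 0) : v = 0 := by
  funext i
  have := (Finset.sum_eq_zero_iff_of_nonneg (fun i _ => abs_nonneg (v i))).mp h i
    (Finset.mem_univ i)
  simpa using this

lemma rank_inj {n l : ℕ} (Ψ : Matrix (Fin n) (Fin l) ℝ) (hΨ : Ψ.rank = n)
    {x : Fin n → ℝ} (hx : Ψ.transpose.mulVec x = 0) : x = 0 := by
  have hr : Ψ.transpose.rank = n := by rw [Matrix.rank_transpose]; exact hΨ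
  have h1 := LinearMap.finrank_range_add_finrank_ker (Ψ.transpose.mulVecLin)
  rw [show Module.finrank ℝ (LinearMap.range Ψ.transpose.mulVecLin) = Ψ.transpose.rank from rfl,
    hr] at h1
  have hdom : Module.finrank ℝ (Fin n → ℝ) = n := by simp
  rw [hdom] at h1
  have hker : Module.finrank ℝ (LinearMap.ker Ψ.transpose.mulVecLin) = 0 := by omega
  have hbot : LinearMap.ker Ψ.transpose.mulVecLin = ⊥ := Submodule.finrank_eq_zero.mp hker
  have hinj := LinearMap.ker_eq_bot.mp hbot
  have : Ψ.transpose.mulVecLin x = Ψ.transpose.mulVecLin 0 := by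
    rw [Matrix.mulVecLin_apply, Matrix.mulVecLin_apply, hx, Matrix.mulVec_zero]
  exact hinj this

/-- for the constrained problem with Ψ of full row rank, either the solution
set is {0} or every solution saturates the constraint. -/
theorem stmt5 {m n l : ℕ} (Φ : Matrix (Fin m) (Fin n) ℝ) (Ψ : Matrix (Fin n) (Fin l) ℝ)
    (b : Fin m → ℝ) (δ : ℝ) (hδ : 0 < δ)
    (hΨ : Ψ.rank = n)
    (Y : Set (Fin n → ℝ))
    (hY : Y = {x | l2 (Φ.mulVec x - b) ≤ δ ∧
      ∀ z, l2 (Φ.mulVec z - b) ≤ δ →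
        l1 (Ψ.transpose.mulVec x) ≤ l1 (Ψ.transpose.mulVec z)})
    (hne : Y.Nonempty) :
    Y = {0} ∨ ∀ x ∈ Y, l2 (Φ.mulVec x - b) = δ := by
  by_cases hsat : ∀ x ∈ Y, l2 (Φ.mulVec x - b) = δ
  · exact Or.inr hsat
  left
  push_neg at hsat
  obtain ⟨x, hxY, hxne⟩ := hsat
  rw [hY] at hxY
  obtain ⟨hxfeas, hxopt⟩ := hxY
  have hr : l2 (Φ.mulVec x - b) < δ := lt_of_le_of_ne hxfeas hxne
  set r := l2 (Φ.mulVec x - b) with hrdef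
  set C := l2 (Φ.mulVec x) with hCdef
  have hC0 : 0 ≤ C := l2_nonneg _
  -- the optimal value at x is 0
  have hL : l1 (Ψ.transpose.mulVec x) = 0 := by
    by_contra hL0
    have hLpos : 0 < l1 (Ψ.transpose.mulVec x) :=
      lt_of_le_of_ne (l1_nonneg _) (Ne.symm hL0)
    set t : ℝ := min ((δ - r) / (C + 1)) 1 with ht
    have hCpos : (0:ℝ) < C + 1 := by linarith
    have htpos : 0 < t := lt_min (div_pos (by linarith) hCpos) one_pos
    have ht1 : t ≤ 1 := min_le_right _ _
    have htC : t * C ≤ δ - r := by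
      have h1 : t ≤ (δ - r) / (C + 1) := min_le_left _ _
      have h2 : t * (C + 1) ≤ ((δ - r) / (C + 1)) * (C + 1) :=
        mul_le_mul_of_nonneg_right h1 (le_of_lt hCpos)
      rw [div_mul_cancel₀ _ (ne_of_gt hCpos)] at h2
      nlinarith
    have hz : Φ.mulVec ((1 - t) • x) - b = (Φ.mulVec x - b) + (-t) • Φ.mulVec x := by
      rw [Matrix.mulVec_smul]
      module
    have hfeas : l2 (Φ.mulVec ((1 - t) • x) - b) ≤ δ := by
      rw [hz]
      calc l2 ((Φ.mulVec x - b) + (-t) • Φ.mulVec x)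
          ≤ l2 (Φ.mulVec x - b) + l2 ((-t) • Φ.mulVec x) := l2_add_le _ _
        _ = r + |(-t)| * C := by rw [l2_smul]
        _ = r + t * C := by rw [abs_neg, abs_of_pos htpos]
        _ ≤ δ := by linarith
    have hle := hxopt _ hfeas
    rw [Matrix.mulVec_smul, l1_smul, abs_of_nonneg (by linarith : (0:ℝ) ≤ 1 - t)] at hle
    nlinarith
  have hx0 : x = 0 := rank_inj Ψ hΨ (l1_eq_zero hL)
  have h0feas : l2 (Φ.mulVec (0 : Fin n → ℝ) - b) ≤ δ := by
    rw [← hx0]; exact hxfeas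
  rw [hY]
  ext y
  simp only [Set.mem_setOf_eq, Set.mem_singleton_iff]
  constructor
  · rintro ⟨hyf, hyopt⟩
    have := hyopt 0 h0feas
    rw [Matrix.mulVec_zero] at this
    have hz0 : l1 (0 : Fin l → ℝ) = 0 := by simp [l1]
    rw [hz0] at this
    exact rank_inj Ψ hΨ (l1_eq_zero (le_antisymm this (l1_nonneg _)))
  · rintro rfl
    refine ⟨h0feas, ?_⟩
    intro z hzf
    rw [Matrix.mulVec_zero]
    have : l1 (0 : Fin l → ℝ) = 0 := by simp [l1]
    rw [this]
    exact l1_nonneg _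
end

section
/- Let x̂ be a minimizer of F(x) = ‖Φx − b‖₂² + λ‖Ψᵀx‖₁ and set b* = Φx̂. Then the solution set of F equals the solution set of the problem: minimize ‖Ψᵀx‖₁ subject to Φx = b*. In particular, x̂ is the unique minimizer of F if and only if it is the unique minimizer of the latter constrained problem. -/
open Matrix

lemma l2_sq' {k : ℕ} (v : Fin k → ℝ) : l2 v ^ 2 = ∑ i, (v i)^2 :=
  Real.sq_sqrt (Finset.sum_nonneg fun _ _ => sq_nonneg _)

lemma l1_mid {k : ℕ} (a c : Fin k → ℝ) :
    l1 (fun i => (a i + c i)/2) ≤ (l1 a + l1 c) / 2 := by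
  unfold l1
  rw [← Finset.sum_add_distrib, Finset.sum_div]
  exact Finset.sum_le_sum fun i _ => by
    rw [abs_div, abs_two]; exact by linarith [abs_add_le (a i) (c i)]

/-- Φ x is constant over the set of minimizers of the lasso objective. -/
lemma phi_const {m n l : ℕ} (Φ : Matrix (Fin m) (Fin n) ℝ) (Ψ : Matrix (Fin n) (Fin l) ℝ)
    (b : Fin m → ℝ) (lam : ℝ) (hlam : 0 < lam)
    (F : (Fin n → ℝ) → ℝ)
    (hF : F = fun x => (l2 (Φ.mulVec x - b)) ^ 2 + lam * l1 (Ψ.transpose.mulVec x))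
    (xh : Fin n → ℝ) (hxh : ∀ z, F xh ≤ F z)
    (x : Fin n → ℝ) (hx : ∀ z, F x ≤ F z) : Φ.mulVec x = Φ.mulVec xh := by
  set u := Φ.mulVec x - b with hu
  set v := Φ.mulVec xh - b with hv
  set mid : Fin n → ℝ := (1/2 : ℝ) • (x + xh) with hmid
  have hmv : Φ.mulVec mid - b = fun i => (u i + v i)/2 := by
    funext i
    simp [hmid, hu, hv, Matrix.mulVec_smul, Matrix.mulVec_add]
    ring
  have hpsi : Ψ.transpose.mulVec mid = fun i => ((Ψ.transpose.mulVec x) i + (Ψ.transpose.mulVec xh) i)/2 := by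
    funext i
    simp [hmid, Matrix.mulVec_smul, Matrix.mulVec_add]
    ring
  have hFx : F x = F xh := le_antisymm (hx xh) (hxh x)
  have hFm := hxh mid
  rw [hF] at hFx hFm
  simp only at hFx hFm
  rw [hmv, hpsi] at hFm
  rw [l2_sq', l2_sq'] at hFm
  rw [l2_sq', l2_sq'] at hFx
  rw [← hu] at hFx
  rw [← hv] at hFx hFm
  have hquad : ∑ i, ((u i + v i)/2)^2
      = (∑ i, (u i)^2) / 2 + (∑ i, (v i)^2) / 2 - ∑ i, ((u i - v i)/2)^2 := by
    rw [Finset.sum_div, Finset.sum_div, ← Finset.sum_add_distrib, ← Finset.sum_sub_distrib]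
    exact Finset.sum_congr rfl fun i _ => by ring
  have hl1m := l1_mid (Ψ.transpose.mulVec x) (Ψ.transpose.mulVec xh)
  have hD0 : (0:ℝ) ≤ ∑ i, ((u i - v i)/2)^2 := Finset.sum_nonneg fun i _ => sq_nonneg _
  have hlamm : lam * ((l1 (Ψ.transpose.mulVec x) + l1 (Ψ.transpose.mulVec xh)) / 2)
      = (lam * l1 (Ψ.transpose.mulVec x) + lam * l1 (Ψ.transpose.mulVec xh)) / 2 := by ring
  have hlml : lam * l1 (fun i => ((Ψ.transpose.mulVec x) i + (Ψ.transpose.mulVec xh) i)/2)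
      ≤ (lam * l1 (Ψ.transpose.mulVec x) + lam * l1 (Ψ.transpose.mulVec xh)) / 2 := by
    rw [← hlamm]; exact mul_le_mul_of_nonneg_left hl1m hlam.le
  have hDz : ∑ i, ((u i - v i)/2)^2 = 0 := by linarith [hFm, hquad]
  have huv : ∀ i, u i = v i := by
    intro i
    have := (Finset.sum_eq_zero_iff_of_nonneg (fun i _ => sq_nonneg ((u i - v i)/2))).mp hDz i (Finset.mem_univ i)
    have h2 : u i - v i = 0 := by
      have := pow_eq_zero_iff (n := 2) (by norm_num) |>.mp this
      linarith [this]
    linarith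
  funext i
  have := huv i
  simp only [hu, hv, Pi.sub_apply] at this
  linarith

/-- the lasso solution set equals the solution set of min ‖Ψᵀx‖₁ s.t. Φx = Φxh,
and in particular uniqueness transfers. -/
theorem stmt6 {m n l : ℕ} (Φ : Matrix (Fin m) (Fin n) ℝ) (Ψ : Matrix (Fin n) (Fin l) ℝ)
    (b : Fin m → ℝ) (lam : ℝ) (hlam : 0 < lam)
    (F : (Fin n → ℝ) → ℝ)
    (hF : F = fun x => (l2 (Φ.mulVec x - b)) ^ 2 + lam * l1 (Ψ.transpose.mulVec x))
    (xh : Fin n → ℝ) (hxh : ∀ z, F xh ≤ F z)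
    (S₁ S₂ : Set (Fin n → ℝ))
    (hS₁ : S₁ = {x | ∀ z, F x ≤ F z})
    (hS₂ : S₂ = {x | Φ.mulVec x = Φ.mulVec xh ∧
      ∀ z, Φ.mulVec z = Φ.mulVec xh →
        l1 (Ψ.transpose.mulVec x) ≤ l1 (Ψ.transpose.mulVec z)}) :
    S₁ = S₂ ∧ (S₁ = {xh} ↔ S₂ = {xh}) := by
  have hset : S₁ = S₂ := by
    rw [hS₁, hS₂]
    ext x
    simp only [Set.mem_setOf_eq]
    constructor
    · intro hx
      have hphi : Φ.mulVec x = Φ.mulVec xh := phi_const Φ Ψ b lam hlam F hF xh hxh x hx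
      refine ⟨hphi, fun z hz => ?_⟩
      have hle := hx z
      rw [hF] at hle
      simp only at hle
      rw [hphi, hz] at hle
      have h3 : lam * l1 (Ψ.transpose.mulVec x) ≤ lam * l1 (Ψ.transpose.mulVec z) := by
        linarith
      exact le_of_mul_le_mul_left h3 hlam
    · rintro ⟨h1, h2⟩ z
      have hx_le_xh : F x ≤ F xh := by
        rw [hF]
        simp only
        rw [h1]
        have := h2 xh rfl
        nlinarith [this, hlam]
      exact le_trans hx_le_xh (hxh z)
  exact ⟨hset, by rw [hset]⟩
end

section
/- Suppose Ψ has full row rank, I ⊆ {1,…,l}, J = Iᶜ, and Ker(Ψᵀ_J) ∩ Ker(Φ) = {0}. Then there exist constants ρ, τ ≥ 0 such that ‖Ψᵀ_I x‖₂ ≤ ρ‖Ψᵀ_J x‖₁ + τ‖Φx‖₂ for all x ∈ ℝⁿ. Conversely, if Ker(Ψᵀ_J) ∩ Ker(Φ) ≠ {0}, no such ρ, τ exist. -/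
open Matrix

lemma l2S_nonneg {k : ℕ} (S : Finset (Fin k)) (v : Fin k → ℝ) : 0 ≤ l2S S v :=
  Real.sqrt_nonneg _

lemma l1S_nonneg {k : ℕ} (S : Finset (Fin k)) (v : Fin k → ℝ) : 0 ≤ l1S S v :=
  Finset.sum_nonneg fun i _ => abs_nonneg _

lemma l2S_smul {k : ℕ} (S : Finset (Fin k)) (c : ℝ) (v : Fin k → ℝ) :
    l2S S (c • v) = |c| * l2S S v := by
  unfold l2S
  rw [← Real.sqrt_sq_eq_abs, ← Real.sqrt_mul (sq_nonneg c), Finset.mul_sum]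
  congr 1; apply Finset.sum_congr rfl; intro i _; simp [mul_pow]

lemma l1S_smul {k : ℕ} (S : Finset (Fin k)) (c : ℝ) (v : Fin k → ℝ) :
    l1S S (c • v) = |c| * l1S S v := by
  unfold l1S
  rw [Finset.mul_sum]
  apply Finset.sum_congr rfl; intro i _; simp [abs_mul]

lemma cont_mulVec {a b : ℕ} (A : Matrix (Fin a) (Fin b) ℝ) :
    Continuous fun x : Fin b → ℝ => A.mulVec x := by
  apply continuous_pi; intro i
  simp only [Matrix.mulVec, dotProduct]
  exact continuous_finset_sum _ fun j _ => (continuous_const.mul (continuous_apply j))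

/-- with Ψ of full row rank, Ker(Ψᵀ_J) ∩ Ker(Φ) = {0} iff there exist
ρ, τ ≥ 0 with ‖Ψᵀ_I x‖₂ ≤ ρ‖Ψᵀ_J x‖₁ + τ‖Φx‖₂ for all x. -/
theorem stmt9 {m n l : ℕ} (Φ : Matrix (Fin m) (Fin n) ℝ) (Ψ : Matrix (Fin n) (Fin l) ℝ)
    (hΨ : Ψ.rank = n)
    (I J : Finset (Fin l)) (hJ : J = Iᶜ) :
    (∀ x : Fin n → ℝ, (∀ i ∈ J, Ψ.transpose.mulVec x i = 0) → Φ.mulVec x = 0 → x = 0)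
    ↔ ∃ ρ τ : ℝ, 0 ≤ ρ ∧ 0 ≤ τ ∧ ∀ x : Fin n → ℝ,
        l2S I (Ψ.transpose.mulVec x)
          ≤ ρ * l1S J (Ψ.transpose.mulVec x) + τ * l2 (Φ.mulVec x) := by
  constructor
  · intro hker
    -- define f and g
    set f : (Fin n → ℝ) → ℝ := fun x => l2S I (Ψ.transpose.mulVec x) with hf
    set g : (Fin n → ℝ) → ℝ := fun x =>
      l1S J (Ψ.transpose.mulVec x) + l2 (Φ.mulVec x) with hg
    have hfc : Continuous f := by
      apply Real.continuous_sqrt.comp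
      exact continuous_finset_sum _ fun i _ =>
        (((continuous_apply i).comp (cont_mulVec Ψ.transpose)).pow 2)
    have hgc : Continuous g := by
      apply Continuous.add
      · exact continuous_finset_sum _ fun i _ =>
          (((continuous_apply i).comp (cont_mulVec Ψ.transpose)).abs)
      · exact Real.continuous_sqrt.comp (continuous_finset_sum _ fun i _ =>
          (((continuous_apply i).comp (cont_mulVec Φ)).pow 2))
    have hgpos : ∀ u ∈ Metric.sphere (0 : Fin n → ℝ) 1, 0 < g u := by
      intro u hu
      by_contra hle
      push_neg at hle
      have h : l1S J (Ψ.transpose.mulVec u) + l2 (Φ.mulVec u) = 0 :=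
        le_antisymm hle (add_nonneg (l1S_nonneg _ _) (l2_nonneg _))
      have h1 : l1S J (Ψ.transpose.mulVec u) = 0 := by
        have := l1S_nonneg J (Ψ.transpose.mulVec u); have := l2_nonneg (Φ.mulVec u)
        linarith
      have h2 : l2 (Φ.mulVec u) = 0 := by
        have := l1S_nonneg J (Ψ.transpose.mulVec u); have := l2_nonneg (Φ.mulVec u)
        linarith
      have hJ0 : ∀ i ∈ J, Ψ.transpose.mulVec u i = 0 := by
        intro i hi
        have hsum : ∑ i ∈ J, |Ψ.transpose.mulVec u i| = 0 := h1
        have := (Finset.sum_eq_zero_iff_of_nonneg (fun i _ => abs_nonneg _)).mp hsum i hi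
        exact abs_eq_zero.mp this
      have hΦ0 : Φ.mulVec u = 0 := by
        unfold l2 at h2
        have hsum : ∑ i, (Φ.mulVec u i) ^ 2 = 0 := by
          have hnn : 0 ≤ ∑ i, (Φ.mulVec u i) ^ 2 :=
            Finset.sum_nonneg fun i _ => sq_nonneg _
          nlinarith [Real.sq_sqrt hnn, h2]
        funext i
        have := (Finset.sum_eq_zero_iff_of_nonneg (fun i _ => sq_nonneg (Φ.mulVec u i))).mp
          hsum i (Finset.mem_univ i)
        exact pow_eq_zero_iff two_ne_zero |>.mp this
      have := hker u hJ0 hΦ0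
      rw [this] at hu
      simp at hu
    -- compactness
    have hcs : IsCompact (Metric.sphere (0 : Fin n → ℝ) 1) := isCompact_sphere 0 1
    by_cases hn : Nonempty (Metric.sphere (0 : Fin n → ℝ) 1)
    case neg =>
      refine ⟨0, 0, le_refl _, le_refl _, fun x => ?_⟩
      have hx0 : x = 0 := by
        by_contra hx
        have : ‖x‖ ≠ 0 := norm_ne_zero_iff.mpr hx
        exact hn ⟨(‖x‖⁻¹ • x), by simp [norm_smul, inv_mul_cancel₀ this]⟩
      subst hx0
      simp only [Matrix.mulVec_zero]
      have : l2S I (0 : Fin l → ℝ) = 0 := by unfold l2S; simp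
      rw [this]; simp
    obtain ⟨u₀, hu₀⟩ := hn
    obtain ⟨uM, huM, huMmax⟩ := hcs.exists_isMaxOn ⟨u₀, hu₀⟩ hfc.continuousOn
    obtain ⟨uδ, huδ, huδmin⟩ := hcs.exists_isMinOn ⟨u₀, hu₀⟩ hgc.continuousOn
    set M := f uM with hM
    set δ := g uδ with hδ
    have hδpos : 0 < δ := hgpos uδ huδ
    have hMnn : 0 ≤ M := Real.sqrt_nonneg _
    refine ⟨M / δ, M / δ, div_nonneg hMnn hδpos.le, div_nonneg hMnn hδpos.le, fun x => ?_⟩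
    rw [← mul_add]
    show f x ≤ M / δ * g x
    by_cases hx : x = 0
    · subst hx
      simp only [hf, hg, Matrix.mulVec_zero]
      have h1 : l2S I (0 : Fin l → ℝ) = 0 := by unfold l2S; simp
      have h2 : l1S J (0 : Fin l → ℝ) = 0 := by unfold l1S; simp
      have h3 : l2 (0 : Fin m → ℝ) = 0 := by unfold l2; simp
      rw [h1, h2, h3]; simp
    · have hxn : (0:ℝ) < ‖x‖ := norm_pos_iff.mpr hx
      set u := ‖x‖⁻¹ • x with hu
      have hus : u ∈ Metric.sphere (0 : Fin n → ℝ) 1 := by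
        simp [hu, norm_smul, inv_mul_cancel₀ hxn.ne']
      have hxu : x = ‖x‖ • u := by
        rw [hu, smul_smul, mul_inv_cancel₀ hxn.ne', one_smul]
      have hfsmul : ∀ (c : ℝ) (y : Fin n → ℝ), f (c • y) = |c| * f y := by
        intro c y
        simp only [hf, Matrix.mulVec_smul, l2S_smul]
      have hgsmul : ∀ (c : ℝ) (y : Fin n → ℝ), g (c • y) = |c| * g y := by
        intro c y
        simp only [hg, Matrix.mulVec_smul, l1S_smul, l2_smul, mul_add]
      have hun : ‖u‖ = 1 := by simpa using mem_sphere_zero_iff_norm.mp hus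
      have hfx : f x = ‖x‖ * f u := by
        conv_lhs => rw [hxu]
        rw [hfsmul, abs_of_nonneg (norm_nonneg x)]
      have hgx : g x = ‖x‖ * g u := by
        conv_lhs => rw [hxu]
        rw [hgsmul, abs_of_nonneg (norm_nonneg x)]
      have hfu : f u ≤ M := huMmax hus
      have hgu : δ ≤ g u := huδmin hus
      have hMδ : M / δ * δ = M := div_mul_cancel₀ M hδpos.ne'
      have hr : 0 ≤ M / δ := div_nonneg hMnn hδpos.le
      rw [hfx, hgx]
      nlinarith [mul_le_mul_of_nonneg_left hgu hr, mul_le_mul_of_nonneg_left hfu hxn.le]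
  · intro ⟨ρ, τ, hρ, hτ, hineq⟩ x hJx hΦx
    have h1 : l1S J (Ψ.transpose.mulVec x) = 0 := by
      unfold l1S; apply Finset.sum_eq_zero; intro i hi; rw [hJx i hi]; simp
    have h2 : l2 (Φ.mulVec x) = 0 := by rw [hΦx]; unfold l2; simp
    have h3 := hineq x
    rw [h1, h2] at h3
    simp only [mul_zero, add_zero] at h3
    have h4 : l2S I (Ψ.transpose.mulVec x) = 0 := le_antisymm h3 (l2S_nonneg _ _)
    have hI0 : ∀ i ∈ I, Ψ.transpose.mulVec x i = 0 := by
      intro i hi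
      unfold l2S at h4
      have hnn : 0 ≤ ∑ i ∈ I, (Ψ.transpose.mulVec x i) ^ 2 :=
        Finset.sum_nonneg fun i _ => sq_nonneg _
      have hsum : ∑ i ∈ I, (Ψ.transpose.mulVec x i) ^ 2 = 0 := by
        nlinarith [Real.sq_sqrt hnn, h4]
      have := (Finset.sum_eq_zero_iff_of_nonneg (fun i _ => sq_nonneg _)).mp hsum i hi
      exact pow_eq_zero_iff two_ne_zero |>.mp this
    have hall : Ψ.transpose.mulVec x = 0 := by
      funext i
      by_cases hi : i ∈ I
      · exact hI0 i hi
      · exact hJx i (hJ ▸ Finset.mem_compl.mpr hi)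
    -- full rank
    have h1r : (Ψ.transpose).rank = n := by rw [Matrix.rank_transpose]; exact hΨ
    have h2r := LinearMap.finrank_range_add_finrank_ker (Ψ.transpose.mulVecLin)
    rw [Matrix.rank] at h1r
    rw [h1r, Module.finrank_fintype_fun_eq_card, Fintype.card_fin] at h2r
    have hkerb : LinearMap.ker (Ψ.transpose.mulVecLin) = ⊥ :=
      Submodule.finrank_eq_zero.mp (by omega)
    exact LinearMap.ker_eq_bot.mp hkerb
      (by simp only [Matrix.mulVecLin_apply, map_zero]; exact hall)
end

section
/- Error decomposition for the analysis recovery: with v = Ψᵀ(x_δ − x*) where x_δ minimizes ‖Ψᵀx‖₁ subject to ‖Φx − b‖₂ ≤ δ and x* is feasible, one has ‖v_J‖₁ ≤ 2‖Ψᵀ_J x*‖₁ + |⟨v_I, sign(Ψᵀ_I x*)⟩|, where I indexes the largest entries of Ψᵀx* and J = Iᶜ. -/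
open Matrix

/-- error decomposition ‖v_J‖₁ ≤ 2‖Ψᵀ_J x*‖₁ + |⟨v_I, sign(Ψᵀ_I x*)⟩|. -/
theorem stmt11 {m n l : ℕ} (Φ : Matrix (Fin m) (Fin n) ℝ) (Ψ : Matrix (Fin n) (Fin l) ℝ)
    (b : Fin m → ℝ) (δ : ℝ)
    (xs : Fin n → ℝ) (hfeasxs : l2 (Φ.mulVec xs - b) ≤ δ)
    (I J : Finset (Fin l)) (hJ : J = Iᶜ)
    (xδ : Fin n → ℝ) (hfeas : l2 (Φ.mulVec xδ - b) ≤ δ)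
    (hmin : ∀ z, l2 (Φ.mulVec z - b) ≤ δ →
      l1 (Ψ.transpose.mulVec xδ) ≤ l1 (Ψ.transpose.mulVec z))
    (v : Fin l → ℝ) (hv : v = Ψ.transpose.mulVec (xδ - xs)) :
    l1S J v ≤ 2 * l1S J (Ψ.transpose.mulVec xs)
      + |∑ i ∈ I, v i * Real.sign (Ψ.transpose.mulVec xs i)| := by
  set u := Ψ.transpose.mulVec xs with hu
  have hw : ∀ i, Ψ.transpose.mulVec xδ i = u i + v i := by
    intro i
    rw [hv, Matrix.mulVec_sub]
    simp [hu]
  have hmin' : l1 (fun i => u i + v i) ≤ l1 u := by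
    have := hmin xs hfeasxs
    simpa [l1, hw] using this
  -- pointwise lower bound on I
  have hptI : ∀ x y : ℝ, |x| + y * Real.sign x ≤ |x + y| := by
    intro x y
    rcases lt_trichotomy x 0 with hx | hx | hx
    · rw [Real.sign_of_neg hx, abs_of_neg hx]
      have : -(x + y) ≤ |x + y| := neg_le_abs _
      linarith
    · simp [hx]
    · rw [Real.sign_of_pos hx, abs_of_pos hx]
      have : x + y ≤ |x + y| := le_abs_self _
      linarith
  have hI : ∑ i ∈ I, |u i| + ∑ i ∈ I, v i * Real.sign (u i) ≤ ∑ i ∈ I, |u i + v i| := by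
    rw [← Finset.sum_add_distrib]
    exact Finset.sum_le_sum fun i _ => hptI (u i) (v i)
  have hJ' : ∑ i ∈ J, |v i| - ∑ i ∈ J, |u i| ≤ ∑ i ∈ J, |u i + v i| := by
    rw [← Finset.sum_sub_distrib]
    refine Finset.sum_le_sum fun i _ => ?_
    have : |v i| ≤ |u i + v i| + |u i| := by
      calc |v i| = |(u i + v i) - u i| := by ring_nf
        _ ≤ |u i + v i| + |u i| := abs_sub _ _
    linarith
  have hsplit : ∀ f : Fin l → ℝ, ∑ i ∈ I, f i + ∑ i ∈ J, f i = ∑ i, f i := by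
    intro f
    rw [hJ]
    exact Finset.sum_add_sum_compl I f
  have h1 : ∑ i ∈ I, |u i + v i| + ∑ i ∈ J, |u i + v i|
      ≤ ∑ i ∈ I, |u i| + ∑ i ∈ J, |u i| := by
    rw [hsplit, hsplit]
    simpa [l1] using hmin'
  have hD : -|∑ i ∈ I, v i * Real.sign (u i)| ≤ ∑ i ∈ I, v i * Real.sign (u i) :=
    neg_abs_le _
  simp only [l1S]
  linarith
end

section
/- Error bound on the kernel of Ψᵀ_J: if Ker(Ψᵀ_J) ∩ Ker(Φ) = {0}, λ_max(ΨΨᵀ) = 1, supp(Ψᵀx̄) = I with J = Iᶜ, and r(J) := sup{‖u‖₂/‖Φu‖₂ : u ∈ Ker(Ψᵀ_J)\{0}} < ∞, then for every u ∈ Ker(Ψᵀ_J): ‖Ψᵀ(u − x̄)‖₁ ≤ r(J)·√|I|·‖Φ(u − x̄)‖₂. -/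
open Matrix

/-- error bound on Ker(Ψᵀ_J): ‖Ψᵀ(u − xb)‖₁ ≤ r(J)√|I| ‖Φ(u − xb)‖₂. -/
theorem stmt14 {m n l : ℕ} (Φ : Matrix (Fin m) (Fin n) ℝ) (Ψ : Matrix (Fin n) (Fin l) ℝ)
    (xb : Fin n → ℝ) (I J : Finset (Fin l))
    (hI : I = Finset.univ.filter fun i => Ψ.transpose.mulVec xb i ≠ 0) (hJ : J = Iᶜ)
    (hker : ∀ h : Fin n → ℝ, (∀ i ∈ J, Ψ.transpose.mulVec h i = 0) →
      Φ.mulVec h = 0 → h = 0)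
    -- λ_max(ΨΨᵀ) = 1, hence ‖Ψᵀz‖₂ ≤ ‖z‖₂ for all z
    (hΨop : ∀ z : Fin n → ℝ, l2 (Ψ.transpose.mulVec z) ≤ l2 z)
    -- r is an upper bound of {‖u‖₂/‖Φu‖₂ : u ∈ Ker(Ψᵀ_J)\{0}} (r(J) is the least such)
    (r : ℝ) (hr0 : 0 ≤ r)
    (hr : ∀ u : Fin n → ℝ, (∀ i ∈ J, Ψ.transpose.mulVec u i = 0) →
      l2 u ≤ r * l2 (Φ.mulVec u)) :
    ∀ u : Fin n → ℝ, (∀ i ∈ J, Ψ.transpose.mulVec u i = 0) →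
      l1 (Ψ.transpose.mulVec (u - xb))
        ≤ r * Real.sqrt I.card * l2 (Φ.mulVec (u - xb)) := by
  intro u hu
  set v := Ψ.transpose.mulVec (u - xb) with hv
  have hvJ : ∀ i ∈ J, v i = 0 := by
    intro i hiJ
    have hx : Ψ.transpose.mulVec xb i = 0 := by
      have : i ∉ I := by simpa [hJ] using hiJ
      simpa [hI] using this
    simp [hv, Matrix.mulVec_sub, hu i hiJ, hx]
  have h1 : l1 v = ∑ i ∈ I, |v i| := by
    rw [l1, ← Finset.sum_add_sum_compl I]
    have hz : ∑ i ∈ Iᶜ, |v i| = 0 := by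
      apply Finset.sum_eq_zero
      intro i hi
      simp [hvJ i (hJ ▸ hi)]
    simp [hz]
  have h2 : ∑ i ∈ I, |v i| ≤ Real.sqrt I.card * l2 v := by
    have hcs : (∑ i ∈ I, |v i|) ^ 2 ≤ (I.card : ℝ) * ∑ i ∈ I, (v i) ^ 2 := by
      have := sq_sum_le_card_mul_sum_sq (s := I) (f := fun i => |v i|)
      simpa [sq_abs] using this
    have hsub : ∑ i ∈ I, (v i) ^ 2 ≤ ∑ i, (v i) ^ 2 := by
      apply Finset.sum_le_sum_of_subset_of_nonneg (Finset.subset_univ I)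
      intro i _ _; positivity
    have h3 : (∑ i ∈ I, |v i|) ^ 2 ≤ (I.card : ℝ) * ∑ i, (v i) ^ 2 :=
      hcs.trans (by
        apply mul_le_mul_of_nonneg_left hsub (by positivity))
    have hnn : (0:ℝ) ≤ ∑ i ∈ I, |v i| := Finset.sum_nonneg fun i _ => abs_nonneg _
    calc ∑ i ∈ I, |v i| ≤ Real.sqrt ((I.card : ℝ) * ∑ i, (v i) ^ 2) := by
          rw [Real.le_sqrt hnn (by positivity)]; exact h3
      _ = Real.sqrt I.card * l2 v := by
          rw [Real.sqrt_mul (by positivity)]; rfl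
  have h4 : l2 v ≤ l2 (u - xb) := hΨop (u - xb)
  have h5 : l2 (u - xb) ≤ r * l2 (Φ.mulVec (u - xb)) := hr (u - xb) hvJ
  have hsq : (0:ℝ) ≤ Real.sqrt I.card := Real.sqrt_nonneg _
  calc l1 v = ∑ i ∈ I, |v i| := h1
    _ ≤ Real.sqrt I.card * l2 v := h2
    _ ≤ Real.sqrt I.card * (r * l2 (Φ.mulVec (u - xb))) := by
        apply mul_le_mul_of_nonneg_left (h4.trans h5) hsq
    _ = r * Real.sqrt I.card * l2 (Φ.mulVec (u - xb)) := by ring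
end

section
/- Condition 3 (Haltmeier-type) implies Condition 1': If ΨΨᵀ is invertible, y ∈ ∂‖·‖₁(Ψᵀx̄) with Ψy ∈ Im(Φᵀ), and for some t ∈ (0,1), with I(t) = {i : |y_i| > t}, the restriction of Φ to Span{((ΨΨᵀ)⁻¹Ψ)_i : i ∈ I(t)} is injective, then setting J = I(t)ᶜ one has ‖y_J‖_∞ ≤ t < 1 and Ker(Ψᵀ_J) ∩ Ker(Φ) = {0}. -/
open Matrix

/-- Condition 3 (Haltmeier-type) implies Condition 1'. -/
theorem stmt15 {m n l : ℕ} (Φ : Matrix (Fin m) (Fin n) ℝ) (Ψ : Matrix (Fin n) (Fin l) ℝ)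
    (hunit : IsUnit (Ψ * Ψ.transpose))
    (xb : Fin n → ℝ) (y : Fin l → ℝ)
    (hy : ∀ i, (Ψ.transpose.mulVec xb i ≠ 0 → y i = Real.sign (Ψ.transpose.mulVec xb i))
      ∧ |y i| ≤ 1)
    (hyIm : ∃ β : Fin m → ℝ, Ψ.mulVec y = Φ.transpose.mulVec β)
    (t : ℝ) (ht : t ∈ Set.Ioo (0 : ℝ) 1)
    (It : Finset (Fin l)) (hIt : It = Finset.univ.filter fun i => t < |y i|)
    (hinj : ∀ x ∈ Submodule.span ℝ
        {v : Fin n → ℝ | ∃ i ∈ It, v = fun j => ((Ψ * Ψ.transpose)⁻¹ * Ψ) j i},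
      Φ.mulVec x = 0 → x = 0) :
    (∀ i ∈ Itᶜ, |y i| ≤ t) ∧
      ∀ x : Fin n → ℝ, (∀ i ∈ Itᶜ, Ψ.transpose.mulVec x i = 0) →
        Φ.mulVec x = 0 → x = 0 := by
  constructor
  · intro i hi
    simp only [hIt, Finset.mem_compl, Finset.mem_filter, Finset.mem_univ, true_and,
      not_lt] at hi
    exact hi
  · intro x hx hΦx
    set A : Matrix (Fin n) (Fin l) ℝ := (Ψ * Ψ.transpose)⁻¹ * Ψ with hA
    have hdet : IsUnit (Ψ * Ψ.transpose).det := (Matrix.isUnit_iff_isUnit_det _).mp hunit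
    have hxeq : A.mulVec (Ψ.transpose.mulVec x) = x := by
      rw [Matrix.mulVec_mulVec, hA, Matrix.mul_assoc, Matrix.nonsing_inv_mul _ hdet,
        Matrix.one_mulVec]
    obtain ⟨w, hw⟩ : ∃ w, Ψ.transpose.mulVec x = w := ⟨_, rfl⟩
    have hw0 : ∀ i ∉ It, w i = 0 := fun i hi => hw ▸ hx i (Finset.mem_compl.mpr hi)
    have hsum : x = ∑ i ∈ It, w i • (fun j => A j i) := by
      rw [← hxeq, hw]
      funext j
      simp only [Matrix.mulVec, dotProduct, Finset.sum_apply, Pi.smul_apply,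
        smul_eq_mul]
      rw [← Finset.sum_subset (Finset.subset_univ It)]
      · exact Finset.sum_congr rfl fun i _ => mul_comm _ _
      · intro i _ hi
        rw [hw0 i hi, mul_zero]
    apply hinj x _ hΦx
    rw [hsum]
    exact Submodule.sum_mem _ fun i hi => Submodule.smul_mem _ _
      (Submodule.subset_span ⟨i, hi, rfl⟩)
end

section
/- Verification by infinity-norm minimization: Let Q be a basis matrix of Ker(Φ), I = supp(Ψᵀx̄), J = Iᶜ, u₁ = −QᵀΨ_I sign(Ψᵀ_I x̄), A = QᵀΨ_J. Then part (2) of Condition 1 holds (∃ y with Ψy ∈ Im(Φᵀ), y_I = sign(Ψᵀ_I x̄), ‖y_J‖_∞ < 1) if and only if the convex program min{‖u‖_∞ : Au = u₁, u ∈ ℝ^{|J|}} has optimal value strictly less than 1. -/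
open Matrix

/-!
Since `Im Φᵀ = (Ker Φ)^⊥` and the columns of `Q` span `Ker Φ`, the condition `Ψy ∈ Im Φᵀ` reads
`QᵀΨy = 0`. As `s` is the sign pattern on `I` and vanishes on `J`, the shift `u = y - s` matches
the certificates `y` with the feasible points `u` of `Au = u₁` of sup-norm `< 1`; here `u` is
stored as a vector on all of `Fin l` vanishing on `I`.
-/

namespace Matrix

variable {K m n k : Type*} [Field K] [Fintype m] [Fintype n] [Fintype k]

theorem exists_transpose_mulVec_eq_iff (A : Matrix m n K) (v : n → K) :
    (∃ β, Aᵀ *ᵥ β = v) ↔ ∀ x, A *ᵥ x = 0 → v ⬝ᵥ x = 0 := by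
  classical
  constructor
  · rintro ⟨β, rfl⟩ x hx
    rw [mulVec_transpose, ← dotProduct_mulVec, hx, dotProduct_zero]
  · intro h
    have hv : dotProductEquiv K n v ∈ (LinearMap.ker A.mulVecLin).dualAnnihilator :=
      (Submodule.mem_dualAnnihilator _).2 h
    rw [← LinearMap.range_dualMap_eq_dualAnnihilator_ker] at hv
    obtain ⟨φ, hφ⟩ := hv
    refine ⟨(dotProductEquiv K m).symm φ, dotProduct_eq _ _ fun x => ?_⟩
    have hφx := LinearMap.congr_fun hφ x
    simp only [LinearMap.dualMap_apply, mulVecLin_apply, dotProductEquiv_apply_apply] at hφx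
    rw [← hφx, mulVec_transpose, ← dotProduct_mulVec, ← dotProductEquiv_apply_apply,
      LinearEquiv.apply_symm_apply]

theorem exists_eq_transpose_mulVec_iff_of_ker {A : Matrix m n K} {Q : Matrix n k K}
    (hQ : ∀ x, A *ᵥ x = 0 ↔ ∃ c, x = Q *ᵥ c) (w : n → K) :
    (∃ β, w = Aᵀ *ᵥ β) ↔ Qᵀ *ᵥ w = 0 := by
  rw [← dotProduct_eq_zero_iff]
  simp_rw [eq_comm (a := w), exists_transpose_mulVec_eq_iff, mulVec_transpose, ← dotProduct_mulVec,
    hQ, forall_exists_index, forall_eq_apply_imp_iff]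

end Matrix

theorem stmt16_general {m n l k : ℕ} (Φ : Matrix (Fin m) (Fin n) ℝ) (Ψ : Matrix (Fin n) (Fin l) ℝ)
    (Q : Matrix (Fin n) (Fin k) ℝ)
    (hQker : ∀ x : Fin n → ℝ, Φ.mulVec x = 0 ↔ ∃ c : Fin k → ℝ, x = Q.mulVec c)
    (xb : Fin n → ℝ) (I : Finset (Fin l))
    (s : Fin l → ℝ)
    (hs : s = fun i => if i ∈ I then Real.sign (Ψ.transpose.mulVec xb i) else 0) :
    ((∃ y : Fin l → ℝ, (∃ β : Fin m → ℝ, Ψ.mulVec y = Φ.transpose.mulVec β) ∧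
        (∀ i ∈ I, y i = Real.sign (Ψ.transpose.mulVec xb i)) ∧ ∀ i ∉ I, |y i| < 1)
      ↔ ∃ u : Fin l → ℝ, (∀ i ∈ I, u i = 0) ∧
          (Q.transpose * Ψ).mulVec u = -((Q.transpose * Ψ).mulVec s) ∧
          ∀ i ∉ I, |u i| < 1) := by
  have hrange : ∀ y, (∃ β, Ψ.mulVec y = Φ.transpose.mulVec β) ↔ (Q.transpose * Ψ).mulVec y = 0 :=
    fun y => by rw [← mulVec_mulVec]; exact exists_eq_transpose_mulVec_iff_of_ker hQker _
  have hsI : ∀ i ∈ I, s i = Real.sign (Ψ.transpose.mulVec xb i) := fun i hi => by simp [hs, hi]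
  have hsJ : ∀ i ∉ I, s i = 0 := fun i hi => by simp [hs, hi]
  constructor
  · rintro ⟨y, hy, hyI, hyJ⟩
    refine ⟨y - s, fun i hi => ?_, ?_, fun i hi => ?_⟩
    · rw [Pi.sub_apply, hyI i hi, hsI i hi, sub_self]
    · rw [mulVec_sub, (hrange y).1 hy, zero_sub]
    · rw [Pi.sub_apply, hsJ i hi, sub_zero]
      exact hyJ i hi
  · rintro ⟨u, huI, hu, huJ⟩
    refine ⟨u + s, (hrange _).2 ?_, fun i hi => ?_, fun i hi => ?_⟩
    · rw [mulVec_add, hu, neg_add_cancel]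
    · rw [Pi.add_apply, huI i hi, hsI i hi, zero_add]
    · rw [Pi.add_apply, hsJ i hi, add_zero]
      exact huJ i hi

/-- verification of part (2) of Condition 1 via ∞-norm minimization. -/
theorem stmt16 {m n l k : ℕ} (Φ : Matrix (Fin m) (Fin n) ℝ) (Ψ : Matrix (Fin n) (Fin l) ℝ)
    (hΦ : Φ.rank = m)
    (Q : Matrix (Fin n) (Fin k) ℝ)
    (hQker : ∀ x : Fin n → ℝ, Φ.mulVec x = 0 ↔ ∃ c : Fin k → ℝ, x = Q.mulVec c)
    (hQinj : Function.Injective Q.mulVec)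
    (xb : Fin n → ℝ) (I : Finset (Fin l))
    (hI : I = Finset.univ.filter fun i => Ψ.transpose.mulVec xb i ≠ 0)
    (s : Fin l → ℝ)
    (hs : s = fun i => if i ∈ I then Real.sign (Ψ.transpose.mulVec xb i) else 0) :
    ((∃ y : Fin l → ℝ, (∃ β : Fin m → ℝ, Ψ.mulVec y = Φ.transpose.mulVec β) ∧
        (∀ i ∈ I, y i = Real.sign (Ψ.transpose.mulVec xb i)) ∧ ∀ i ∉ I, |y i| < 1)
      ↔ ∃ u : Fin l → ℝ, (∀ i ∈ I, u i = 0) ∧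
          (Q.transpose * Ψ).mulVec u = -((Q.transpose * Ψ).mulVec s) ∧
          ∀ i ∉ I, |u i| < 1) :=
  stmt16_general Φ Ψ Q hQker xb I s hs
end

section
/- Dual certificate construction via LP duality: suppose for all h ∈ Ker(Φ)\{0}, ⟨Ψᵀ_I h, sign(Ψᵀ_I x̂)⟩ < ‖Ψᵀ_{Iᶜ} h‖₁. Then there exists y ∈ ℝˡ with Ψy ∈ Im(Φᵀ), y_I = sign(Ψᵀ_I x̂), and ‖y_{Iᶜ}‖_∞ < 1. -/
open Matrix

/-- If `v` is orthogonal to the kernel of `Φ` (full row rank), then `v` is in the row space. -/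
lemma aux_row_space {m n : ℕ} (Φ : Matrix (Fin m) (Fin n) ℝ) (hΦ : Φ.rank = m)
    (v : Fin n → ℝ) (hv : ∀ h : Fin n → ℝ, Φ.mulVec h = 0 → v ⬝ᵥ h = 0) :
    ∃ β : Fin m → ℝ, v = Φ.transpose.mulVec β := by
  have hr : (Φ * Φᵀ).rank = m := by rw [Matrix.rank_self_mul_transpose, hΦ]
  have hsurj : LinearMap.range (Φ * Φᵀ).mulVecLin = ⊤ := by
    apply Submodule.eq_top_of_finrank_eq
    rw [show Module.finrank ℝ ↥(LinearMap.range (Φ * Φᵀ).mulVecLin) = (Φ * Φᵀ).rank from rfl, hr]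
    simp [Module.finrank_pi]
  have hmem : Φ.mulVec v ∈ LinearMap.range (Φ * Φᵀ).mulVecLin := by rw [hsurj]; trivial
  obtain ⟨β, hβ⟩ := hmem
  rw [Matrix.mulVecLin_apply] at hβ
  set h : Fin n → ℝ := v - Φᵀ.mulVec β with hh
  have hker : Φ.mulVec h = 0 := by
    rw [hh, Matrix.mulVec_sub, Matrix.mulVec_mulVec, hβ, sub_self]
  have h1 : v ⬝ᵥ h = 0 := hv h hker
  have h2 : Φᵀ.mulVec β ⬝ᵥ h = 0 := by
    rw [dotProduct_comm, Matrix.dotProduct_mulVec, ← Matrix.mulVec_transpose,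
      Matrix.transpose_transpose, hker, zero_dotProduct]
  have h3 : h ⬝ᵥ h = 0 := by
    rw [hh]
    rw [sub_dotProduct]
    rw [← hh, h1, h2, sub_zero]
  have h0 : h = 0 := dotProduct_self_eq_zero.mp h3
  exact ⟨β, by rw [← sub_eq_zero]; exact h0⟩


/-- Hahn–Banach extension on `ℓ¹(Fin l)` of a functional that is strictly dominated by the norm. -/
lemma aux_extension {l : ℕ} (V : Submodule ℝ (PiLp 1 (fun _ : Fin l => ℝ)))
    (f : V →ₗ[ℝ] ℝ) (hf : ∀ v : V, v ≠ 0 → |f v| < ‖v‖) :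
    ∃ y : Fin l → ℝ, (∀ j, |y j| < 1) ∧
      ∀ v : V, ∑ j, (v : PiLp 1 (fun _ : Fin l => ℝ)) j * y j = f v := by
  classical
  -- get a uniform bound c < 1
  obtain ⟨c, hc0, hc1, hbound⟩ : ∃ c : ℝ, 0 ≤ c ∧ c < 1 ∧ ∀ v : V, |f v| ≤ c * ‖v‖ := by
    by_cases hV : ∀ v : V, v = 0
    · exact ⟨0, le_refl 0, one_pos, fun v => by rw [hV v]; simp⟩
    · push_neg at hV
      obtain ⟨v₀, hv₀⟩ := hV
      have hn : ‖v₀‖ ≠ 0 := by simpa using hv₀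
      have hu : ‖(‖v₀‖⁻¹ • v₀ : V)‖ = 1 := by
        rw [norm_smul, norm_inv, norm_norm, inv_mul_cancel₀ hn]
      have hc : Continuous fun v : V => |f v| := f.continuous_of_finiteDimensional.abs
      obtain ⟨w, hw, hmax⟩ := (isCompact_sphere (0 : V) 1).exists_isMaxOn
        ⟨_, by rwa [mem_sphere_zero_iff_norm]⟩ hc.continuousOn
      rw [mem_sphere_zero_iff_norm] at hw
      have hwne : w ≠ 0 := by intro h0; rw [h0, norm_zero] at hw; norm_num at hw
      refine ⟨|f w|, abs_nonneg _, by simpa [hw] using hf w hwne, fun v => ?_⟩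
      rcases eq_or_ne v 0 with rfl | hvne
      · simp
      · have hnv : ‖v‖ ≠ 0 := by simpa using hvne
        have hmem : (‖v‖⁻¹ • v : V) ∈ Metric.sphere (0 : V) 1 := by
          rw [mem_sphere_zero_iff_norm, norm_smul, norm_inv, norm_norm, inv_mul_cancel₀ hnv]
        have := hmax hmem
        simp only [Set.mem_setOf_eq] at this
        rw [f.map_smul, smul_eq_mul, abs_mul, abs_inv, abs_norm] at this
        have hpos : (0:ℝ) < ‖v‖ := lt_of_le_of_ne (norm_nonneg v) (Ne.symm hnv)
        calc |f v| = ‖v‖ * (‖v‖⁻¹ * |f v|) := by rw [← mul_assoc, mul_inv_cancel₀ hnv, one_mul]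
        _ ≤ ‖v‖ * |f w| := mul_le_mul_of_nonneg_left this (norm_nonneg v)
        _ = |f w| * ‖v‖ := mul_comm _ _
  -- continuous linear map and Hahn-Banach extension
  let fc : V →L[ℝ] ℝ := f.mkContinuous c (fun v => by simpa [Real.norm_eq_abs] using hbound v)
  have hfcnorm : ‖fc‖ ≤ c := f.mkContinuous_norm_le hc0 _
  obtain ⟨g, hg, hgnorm⟩ := exists_extension_norm_eq V fc
  -- basis vectors
  let e : Fin l → PiLp 1 (fun _ : Fin l => ℝ) :=
    fun j => (WithLp.equiv 1 (∀ _ : Fin l, ℝ)).symm (Pi.single j 1)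
  have hnorme : ∀ j, ‖e j‖ = 1 := by
    intro j
    rw [PiLp.norm_eq_sum (by norm_num)]
    simp [e, Pi.single_apply, apply_ite (‖·‖)]
  refine ⟨fun j => g (e j), fun j => ?_, fun v => ?_⟩
  · calc |g (e j)| ≤ ‖g‖ * ‖e j‖ := g.le_opNorm _
    _ ≤ c := by rw [hnorme j, mul_one, hgnorm]; exact hfcnorm
    _ < 1 := hc1
  · -- decomposition
    have hdec : (v : PiLp 1 (fun _ : Fin l => ℝ)) = ∑ j, (v : PiLp 1 (fun _ : Fin l => ℝ)) j • e j := by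
      apply (WithLp.linearEquiv 1 ℝ (∀ _ : Fin l, ℝ)).injective
      rw [map_sum]
      funext i
      simp [e, Finset.sum_apply, Pi.single_apply, mul_ite, Finset.sum_ite_eq']
    calc ∑ j, (v : PiLp 1 (fun _ : Fin l => ℝ)) j * g (e j)
        = g ((v : PiLp 1 (fun _ : Fin l => ℝ))) := by
          conv_rhs => rw [hdec]
          rw [map_sum]
          simp [smul_eq_mul]
    _ = fc v := hg v
    _ = f v := rfl


/-- dual certificate construction via LP strong duality. -/
theorem stmt19 {m n l : ℕ} (Φ : Matrix (Fin m) (Fin n) ℝ) (Ψ : Matrix (Fin n) (Fin l) ℝ)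
    (hΦ : Φ.rank = m)
    (xh : Fin n → ℝ) (I : Finset (Fin l))
    (hI : I = Finset.univ.filter fun i => Ψ.transpose.mulVec xh i ≠ 0)
    (hns : ∀ h : Fin n → ℝ, Φ.mulVec h = 0 → h ≠ 0 →
      ∑ i ∈ I, Ψ.transpose.mulVec h i * Real.sign (Ψ.transpose.mulVec xh i)
        < l1S Iᶜ (Ψ.transpose.mulVec h)) :
    ∃ y : Fin l → ℝ, (∃ β : Fin m → ℝ, Ψ.mulVec y = Φ.transpose.mulVec β) ∧
      (∀ i ∈ I, y i = Real.sign (Ψ.transpose.mulVec xh i)) ∧ ∀ i ∉ I, |y i| < 1 := by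
  classical
  set s : Fin l → ℝ := fun i => Real.sign (Ψᵀ.mulVec xh i) with hs
  -- the projection killing coordinates in I
  set P : (Fin l → ℝ) →ₗ[ℝ] (Fin l → ℝ) :=
    { toFun := fun v j => if j ∈ I then 0 else v j
      map_add' := by intro a b; funext j; by_cases hj : j ∈ I <;> simp [hj]
      map_smul' := by intro c a; funext j; by_cases hj : j ∈ I <;> simp [hj] } with hP
  set A : (Fin n → ℝ) →ₗ[ℝ] PiLp 1 (fun _ : Fin l => ℝ) :=
    (WithLp.linearEquiv 1 ℝ (∀ _ : Fin l, ℝ)).symm.toLinearMap ∘ₗ P ∘ₗ Ψᵀ.mulVecLin with hA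
  set K : Submodule ℝ (Fin n → ℝ) := LinearMap.ker Φ.mulVecLin with hK
  set A' : K →ₗ[ℝ] PiLp 1 (fun _ : Fin l => ℝ) := A ∘ₗ K.subtype with hA'
  have hAapp : ∀ (h : Fin n → ℝ) (j : Fin l),
      A h j = if j ∈ I then 0 else Ψᵀ.mulVec h j := fun h j => rfl
  have hKmem : ∀ h : K, Φ.mulVec (h : Fin n → ℝ) = 0 := fun h => h.2
  -- injectivity of A'
  have hzero : ∀ h : Fin n → ℝ, Φ.mulVec h = 0 → (∀ j ∉ I, Ψᵀ.mulVec h j = 0) → h = 0 := by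
    intro h hker hsupp
    by_contra hne
    have h1 := hns h hker hne
    have h2 := hns (-h) (by rw [Matrix.mulVec_neg, hker, neg_zero]) (neg_ne_zero.mpr hne)
    have hz : l1S Iᶜ (Ψᵀ.mulVec h) = 0 := by
      apply Finset.sum_eq_zero
      intro j hj
      rw [abs_eq_zero]
      exact hsupp j (Finset.mem_compl.mp hj)
    rw [Matrix.mulVec_neg] at h2
    have hz2 : l1S Iᶜ (-(Ψᵀ.mulVec h)) = 0 := by
      simpa [l1S, abs_neg] using hz
    rw [hz2] at h2
    rw [hz] at h1
    simp only [Pi.neg_apply, neg_mul, Finset.sum_neg_distrib] at h2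
    linarith
  have hinj : Function.Injective A' := by
    rw [← LinearMap.ker_eq_bot, LinearMap.ker_eq_bot']
    intro h hh
    have hsupp : ∀ j ∉ I, Ψᵀ.mulVec (h : Fin n → ℝ) j = 0 := by
      intro j hj
      have h2 := congrFun (congrArg (fun x : PiLp 1 (fun _ : Fin l => ℝ) => (x : ∀ _ : Fin l, ℝ)) hh) j
      have h3 : (if j ∈ I then (0:ℝ) else Ψᵀ.mulVec (h : Fin n → ℝ) j) = 0 := h2
      rwa [if_neg hj] at h3
    exact Subtype.ext (hzero _ (hKmem h) hsupp)
  set e : K ≃ₗ[ℝ] LinearMap.range A' := LinearEquiv.ofInjective A' hinj with he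
  set g0 : K →ₗ[ℝ] ℝ :=
    { toFun := fun h => -∑ i ∈ I, Ψᵀ.mulVec (h : Fin n → ℝ) i * s i
      map_add' := by
        intro a b
        simp only [Submodule.coe_add, Matrix.mulVec_add, Pi.add_apply, add_mul,
          Finset.sum_add_distrib]
        ring
      map_smul' := by
        intro c a
        simp only [SetLike.val_smul, Matrix.mulVec_smul, Pi.smul_apply, smul_eq_mul,
          RingHom.id_apply, mul_neg, Finset.mul_sum, neg_inj, ← mul_assoc] } with hg0
  set f : LinearMap.range A' →ₗ[ℝ] ℝ := g0 ∘ₗ e.symm.toLinearMap with hf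
  have hfe : ∀ h : K, f (e h) = g0 h := by
    intro h
    rw [hf]
    simp
  have hecoe : ∀ h : K, ((e h : LinearMap.range A') : PiLp 1 (fun _ : Fin l => ℝ)) = A' h :=
    fun h => rfl
  -- norm of e h
  have hnorm : ∀ h : K, ‖(e h : LinearMap.range A')‖ = l1S Iᶜ (Ψᵀ.mulVec (h : Fin n → ℝ)) := by
    intro h
    have : ‖(e h : LinearMap.range A')‖ = ‖(A' h : PiLp 1 (fun _ : Fin l => ℝ))‖ := rfl
    rw [this, PiLp.norm_eq_sum (by norm_num)]
    simp only [ENNReal.toReal_one, Real.rpow_one, one_div, inv_one]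
    have : ∀ j, ‖(A' h : PiLp 1 (fun _ : Fin l => ℝ)) j‖ =
        if j ∈ I then 0 else |Ψᵀ.mulVec (h : Fin n → ℝ) j| := by
      intro j
      rw [show (A' h : PiLp 1 (fun _ : Fin l => ℝ)) j = if j ∈ I then 0 else Ψᵀ.mulVec (h : Fin n → ℝ) j from rfl]
      by_cases hj : j ∈ I <;> simp [hj, Real.norm_eq_abs]
    rw [Finset.sum_congr rfl fun j _ => this j]
    rw [← Finset.sum_compl_add_sum I]
    have e1 : ∀ j ∈ Iᶜ, (if j ∈ I then (0:ℝ) else |Ψᵀ.mulVec (h : Fin n → ℝ) j|)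
        = |Ψᵀ.mulVec (h : Fin n → ℝ) j| := fun j hj => if_neg (Finset.mem_compl.mp hj)
    have e2 : ∀ j ∈ I, (if j ∈ I then (0:ℝ) else |Ψᵀ.mulVec (h : Fin n → ℝ) j|) = 0 :=
      fun j hj => if_pos hj
    rw [Finset.sum_congr rfl e1, Finset.sum_congr rfl e2, Finset.sum_const_zero, add_zero]
    rfl
  -- strict bound
  have hfb : ∀ v : LinearMap.range A', v ≠ 0 → |f v| < ‖v‖ := by
    intro v hv
    obtain ⟨h, rfl⟩ : ∃ h : K, e h = v := ⟨e.symm v, e.apply_symm_apply v⟩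
    have hhne : h ≠ 0 := by rintro rfl; simp at hv
    have hcoene : (h : Fin n → ℝ) ≠ 0 := fun h0 => hhne (Subtype.ext h0)
    have h1 := hns _ (hKmem h) hcoene
    have h2 := hns (-(h : Fin n → ℝ)) (by rw [Matrix.mulVec_neg, hKmem h, neg_zero])
      (neg_ne_zero.mpr hcoene)
    rw [Matrix.mulVec_neg] at h2
    have hz2 : l1S Iᶜ (-(Ψᵀ.mulVec (h : Fin n → ℝ))) = l1S Iᶜ (Ψᵀ.mulVec (h : Fin n → ℝ)) := by
      simp [l1S, abs_neg]
    rw [hz2] at h2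
    simp only [Pi.neg_apply, neg_mul, Finset.sum_neg_distrib] at h2
    rw [hfe, hnorm]
    rw [hg0]
    simp only [LinearMap.coe_mk, AddHom.coe_mk, abs_neg]
    rw [abs_lt]
    constructor <;> linarith
  obtain ⟨y', hy'1, hy'2⟩ := aux_extension (LinearMap.range A') f hfb
  refine ⟨fun j => if j ∈ I then s j else y' j, ?_, ?_, ?_⟩
  · apply aux_row_space Φ hΦ
    intro h hker
    have hKm : h ∈ K := by rwa [hK, LinearMap.mem_ker, Matrix.mulVecLin_apply]
    have key := hy'2 (e ⟨h, hKm⟩)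
    rw [hfe, hg0] at key
    simp only [LinearMap.coe_mk, AddHom.coe_mk] at key
    have hsum : ∑ j, ((e ⟨h, hKm⟩ : LinearMap.range A') : PiLp 1 (fun _ : Fin l => ℝ)) j * y' j
        = ∑ j ∈ Iᶜ, Ψᵀ.mulVec h j * y' j := by
      rw [← Finset.sum_compl_add_sum I]
      have e1 : ∀ j ∈ Iᶜ, ((e ⟨h, hKm⟩ : LinearMap.range A') : PiLp 1 (fun _ : Fin l => ℝ)) j * y' j
          = Ψᵀ.mulVec h j * y' j := by
        intro j hj
        rw [show ((e ⟨h, hKm⟩ : LinearMap.range A') : PiLp 1 (fun _ : Fin l => ℝ)) j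
          = if j ∈ I then 0 else Ψᵀ.mulVec h j from rfl, if_neg (Finset.mem_compl.mp hj)]
      have e2 : ∀ j ∈ I, ((e ⟨h, hKm⟩ : LinearMap.range A') : PiLp 1 (fun _ : Fin l => ℝ)) j * y' j
          = 0 := by
        intro j hj
        rw [show ((e ⟨h, hKm⟩ : LinearMap.range A') : PiLp 1 (fun _ : Fin l => ℝ)) j
          = if j ∈ I then 0 else Ψᵀ.mulVec h j from rfl, if_pos hj, zero_mul]
      rw [Finset.sum_congr rfl e1, Finset.sum_congr rfl e2, Finset.sum_const_zero, add_zero]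
    rw [hsum] at key
    -- now compute the dot product
    rw [dotProduct_comm, Matrix.dotProduct_mulVec, ← Matrix.mulVec_transpose]
    show ∑ j, Ψᵀ.mulVec h j * (if j ∈ I then s j else y' j) = 0
    rw [← Finset.sum_compl_add_sum I]
    have e3 : ∀ j ∈ Iᶜ, Ψᵀ.mulVec h j * (if j ∈ I then s j else y' j) = Ψᵀ.mulVec h j * y' j :=
      fun j hj => by rw [if_neg (Finset.mem_compl.mp hj)]
    have e4 : ∀ j ∈ I, Ψᵀ.mulVec h j * (if j ∈ I then s j else y' j) = Ψᵀ.mulVec h j * s j :=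
      fun j hj => by rw [if_pos hj]
    rw [Finset.sum_congr rfl e3, Finset.sum_congr rfl e4, key]
    ring
  · intro i hi
    simp [hi, hs]
  · intro i hi
    simp only [if_neg hi]
    exact hy'1 i
end
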